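/- arXiv:1011.3012 — 3 statements merged into one kernel-verified Lean document; each statement's English description precedes it below -/
import Mathlib

section
/- Let w be a K-quasiconformal mapping differentiable a.e. with |Δw| ≤ B|∇w|² in the weak sense on a region where the distance function d to ∂Ω is C^{1,1} with |∇d| = 1 and the curvature bound |κ| ≤ κ₀ holds with d < 1/(2κ₀). Then χ = −d∘w satisfies |Δχ| ≤ (2κ₀ + B)K²|∇χ|², pointwise wherever the identity Δχ = (κ/(1−κd))|(O∇w)ᵀe₁|² − ⟨∇d(w), Δw⟩ holds. -/
open scoped RealInnerProductSpace

/-! Inside the collar `κ₀ d < 1/2`, hence the curvature factor `κ / (1 - κ d)` is at most `2κ₀` in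
absolute value. Both terms of the identity for `Δχ` are then bounded by multiples of `|∇w|²`
(the second by Cauchy–Schwarz, `∇d` being a unit vector), and quasiconformality turns
`|∇w|²` into `K²|∇χ|²`. -/

lemma abs_mul_lt_half_of_lt_inv_two_mul {κ κ₀ d : ℝ} (hκ : |κ| ≤ κ₀) (hκ₀ : 0 < κ₀)
    (hd0 : 0 ≤ d) (hd : d < 1 / (2 * κ₀)) : |κ * d| < 1 / 2 :=
  calc |κ * d| = |κ| * d := by rw [abs_mul, abs_of_nonneg hd0]
    _ ≤ κ₀ * d := mul_le_mul_of_nonneg_right hκ hd0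
    _ < κ₀ * (1 / (2 * κ₀)) := mul_lt_mul_of_pos_left hd hκ₀
    _ = 1 / 2 := by field_simp

lemma abs_div_one_sub_le_two_mul {a x : ℝ} (hx : |x| ≤ 1 / 2) : |a / (1 - x)| ≤ 2 * |a| := by
  have hden : 1 / 2 ≤ 1 - x := by linarith [le_abs_self x]
  rw [abs_div, abs_of_pos (show 0 < 1 - x by linarith), div_le_iff₀ (by linarith)]
  nlinarith [abs_nonneg a]

lemma abs_mul_sq_sub_le {a t s N C D : ℝ} (ha : |a| ≤ C) (ht : |t| ≤ N)
    (hs : |s| ≤ D * N ^ 2) : |a * t ^ 2 - s| ≤ (C + D) * N ^ 2 := by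
  have ht2 : t ^ 2 ≤ N ^ 2 := by
    simpa only [sq_abs] using pow_le_pow_left₀ (abs_nonneg t) ht 2
  calc |a * t ^ 2 - s| ≤ |a| * t ^ 2 + |s| := by
        have := abs_sub (a * t ^ 2) s
        rwa [abs_mul, abs_of_nonneg (sq_nonneg t)] at this
    _ ≤ C * N ^ 2 + D * N ^ 2 := by gcongr; exact (abs_nonneg a).trans ha
    _ = (C + D) * N ^ 2 := by ring

/-- `Lχ = Δχ(z)`, `κ` is the curvature at the boundary point nearest to `w z`, `dval = d(w z)`,
`g = ∇d(w z)`, `t = |(O∇w)ᵀe₁|`, `Nw = |∇w(z)|` and `Nχ = |∇χ(z)|`. -/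
theorem stmt9_general (κ κ₀ B K dval Lχ t Nw Nχ : ℝ)
    (g Δw : EuclideanSpace ℝ (Fin 2))
    (hκ : |κ| ≤ κ₀) (hκ₀ : 0 < κ₀) (hB : 0 ≤ B)
    (hd0 : 0 ≤ dval) (hd : dval < 1 / (2 * κ₀))
    (hg : ‖g‖ = 1)
    (hΔw : ‖Δw‖ ≤ B * Nw ^ 2)
    (ht : |t| ≤ Nw)
    (hqc : Nw ≤ K * Nχ)
    (hid : Lχ = κ / (1 - κ * dval) * t ^ 2 - ⟪g, Δw⟫) :
    |Lχ| ≤ (2 * κ₀ + B) * K ^ 2 * Nχ ^ 2 := by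
  have hfrac : |κ / (1 - κ * dval)| ≤ 2 * κ₀ :=
    (abs_div_one_sub_le_two_mul (abs_mul_lt_half_of_lt_inv_two_mul hκ hκ₀ hd0 hd).le).trans
      (by linarith)
  have hinner : |⟪g, Δw⟫| ≤ B * Nw ^ 2 :=
    ((abs_real_inner_le_norm g Δw).trans_eq (by rw [hg, one_mul])).trans hΔw
  have hNw : Nw ^ 2 ≤ K ^ 2 * Nχ ^ 2 := by
    simpa only [mul_pow] using pow_le_pow_left₀ ((abs_nonneg t).trans ht) hqc 2
  calc |Lχ| ≤ (2 * κ₀ + B) * Nw ^ 2 := hid ▸ abs_mul_sq_sub_le hfrac ht hinner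
    _ ≤ (2 * κ₀ + B) * (K ^ 2 * Nχ ^ 2) := mul_le_mul_of_nonneg_left hNw (by linarith)
    _ = (2 * κ₀ + B) * K ^ 2 * Nχ ^ 2 := by ring

/-- Pointwise bound `|Δχ| ≤ (2κ₀ + B)K²|∇χ|²` for `χ = -d ∘ w`, at a point where the identity
`Δχ = (κ/(1-κd))|(O∇w)ᵀe₁|² - ⟨∇d(w), Δw⟩` holds. Here `κ` is the boundary curvature at the
nearest point (`|κ| ≤ κ₀`), `dval = d(w z) < 1/(2κ₀)`, `g = ∇d(w z)` is a unit vector,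
`Δw` satisfies `|Δw| ≤ B|∇w|²`, `t = |(O∇w)ᵀe₁| ≤ |∇w| = Nw`, and quasiconformality gives
`Nw ≤ K·Nχ` with `Nχ = |∇χ|`. -/
theorem stmt9 (κ κ₀ B K dval Lχ t Nw Nχ : ℝ)
    (g Δw : EuclideanSpace ℝ (Fin 2))
    (hκ : |κ| ≤ κ₀) (hκ₀ : 0 < κ₀) (hB : 0 ≤ B) (hK : 1 ≤ K)
    (hd0 : 0 ≤ dval) (hd : dval < 1 / (2 * κ₀))
    (hg : ‖g‖ = 1)
    (hΔw : ‖Δw‖ ≤ B * Nw ^ 2)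
    (ht : |t| ≤ Nw) (hNw : 0 ≤ Nw)
    (hqc : Nw ≤ K * Nχ)
    (hid : Lχ = κ / (1 - κ * dval) * t ^ 2 - ⟪g, Δw⟫) :
    |Lχ| ≤ (2 * κ₀ + B) * K ^ 2 * Nχ ^ 2 :=
  stmt9_general κ κ₀ B K dval Lχ t Nw Nχ g Δw hκ hκ₀ hB hd0 hd hg hΔw ht hqc hid
end

section
/- Let w be a sense-preserving harmonic diffeomorphism of the unit disk such that w ∈ C¹ of the closed disk and there is a constant c > 0 with ||w_z(t)| − |w_{z̄}(t)|| ≥ c for every t on the unit circle. Then ||w_z(z)| − |w_{z̄}(z)|| ≥ c for every z in the open disk. -/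
open Metric Complex Bornology

/-!
On the circle `|w_z| - |w_z̄| ≥ c` holds without the absolute value, since `|w_z| > |w_z̄|`
inside. Fix `z` and a unimodular `u` aligned with `w_z̄(z)`. The quotient `(w_z̄ + c u) / w_z` is
holomorphic on the disk and continuous up to the circle, where it has modulus at most `1`; by the
maximum principle it has modulus at most `1` at `z`, which reads `|w_z̄(z)| + c ≤ |w_z(z)|`.
-/

theorem Complex.exists_norm_eq_one_norm_add_mul (a : ℂ) {c : ℝ} (hc : 0 ≤ c) :
    ∃ u : ℂ, ‖u‖ = 1 ∧ ‖a + c * u‖ = ‖a‖ + c := by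
  refine ⟨exp (arg a * I), norm_exp_ofReal_mul_I _, ?_⟩
  nth_rw 1 [← norm_mul_exp_arg_mul_I a]
  rw [← add_mul, ← ofReal_add, norm_mul, norm_exp_ofReal_mul_I, mul_one, norm_real,
    Real.norm_of_nonneg (by positivity)]

theorem DiffContOnCl.norm_add_le_norm_of_forall_mem_frontier {E : Type*}
    [NormedAddCommGroup E] [NormedSpace ℂ E] [Nontrivial E] {G H : E → ℂ} {U : Set E}
    (hU : IsBounded U) (hG : DiffContOnCl ℂ G U) (hH : DiffContOnCl ℂ H U)
    (hG₀ : ∀ x ∈ closure U, G x ≠ 0) {c : ℝ} (hc : 0 ≤ c)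
    (hfrontier : ∀ x ∈ frontier U, ‖H x‖ + c ≤ ‖G x‖) {z : E} (hz : z ∈ closure U) :
    ‖H z‖ + c ≤ ‖G z‖ := by
  obtain ⟨u, hu, hHu⟩ := exists_norm_eq_one_norm_add_mul (H z) hc
  have hcu : ‖(c : ℂ) * u‖ = c := by
    rw [norm_mul, hu, mul_one, norm_real, Real.norm_of_nonneg hc]
  have hquot : DiffContOnCl ℂ (fun x => (G x)⁻¹ • (H x + c * u)) U :=
    (hG.inv hG₀).smul (hH.add_const _)
  have hmax := norm_le_of_forall_mem_frontier_norm_le hU hquot (C := 1) (fun x hx => by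
    rw [norm_smul, norm_inv,
      inv_mul_le_one₀ (norm_pos_iff.2 (hG₀ x (frontier_subset_closure hx)))]
    calc ‖H x + c * u‖ ≤ ‖H x‖ + ‖(c : ℂ) * u‖ := norm_add_le _ _
      _ ≤ ‖G x‖ := by rw [hcu]; exact hfrontier x hx) hz
  rwa [norm_smul, norm_inv, inv_mul_le_one₀ (norm_pos_iff.2 (hG₀ z hz)), hHu] at hmax

theorem DifferentiableOn.diffContOnCl_of_eqOn_deriv {f f' : ℂ → ℂ} {U : Set ℂ}
    (hU : IsOpen U) (hf : DifferentiableOn ℂ f U) (hf' : ContinuousOn f' (closure U))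
    (heq : Set.EqOn f' (_root_.deriv f) U) : DiffContOnCl ℂ f' U :=
  ⟨(hf.analyticOnNhd hU).deriv.differentiableOn.congr heq, hf'⟩

theorem stmt11_general (g h gz hz : ℂ → ℂ) (c : ℝ) (hc : 0 < c)
    (hg : DifferentiableOn ℂ g (ball (0 : ℂ) 1)) (hh : DifferentiableOn ℂ h (ball (0 : ℂ) 1))
    (hgzc : ContinuousOn gz (closedBall (0 : ℂ) 1))
    (hhzc : ContinuousOn hz (closedBall (0 : ℂ) 1))
    (hgz : ∀ z ∈ ball (0 : ℂ) 1, gz z = deriv g z)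
    (hhz : ∀ z ∈ ball (0 : ℂ) 1, hz z = deriv h z)
    (hsense : ∀ z ∈ ball (0 : ℂ) 1, ‖hz z‖ < ‖gz z‖)
    (hbd : ∀ t : ℂ, ‖t‖ = 1 → c ≤ |‖gz t‖ - ‖hz t‖|) :
    ∀ z ∈ ball (0 : ℂ) 1, c ≤ |‖gz z‖ - ‖hz z‖| := by
  have hclosure : closure (ball (0 : ℂ) 1) = closedBall 0 1 := closure_ball 0 one_ne_zero
  have hsphere : ∀ t ∈ frontier (ball (0 : ℂ) 1), ‖hz t‖ + c ≤ ‖gz t‖ := by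
    intro t ht
    have hsense_t : ‖hz t‖ ≤ ‖gz t‖ := le_on_closure (fun x hx => (hsense x hx).le)
      (hclosure ▸ hhzc.norm) (hclosure ▸ hgzc.norm) (frontier_subset_closure ht)
    have := hbd t (by simpa [frontier_ball (0 : ℂ) one_ne_zero] using ht)
    rw [abs_of_nonneg (sub_nonneg.2 hsense_t)] at this
    linarith
  have hgz₀ : ∀ x ∈ closure (ball (0 : ℂ) 1), gz x ≠ 0 := by
    rw [closure_eq_self_union_frontier]
    rintro x (hx | hx) hzero
    · exact (norm_nonneg _).not_gt (by simpa [hzero] using hsense x hx)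
    · have := hsphere x hx
      rw [hzero, norm_zero] at this
      linarith [norm_nonneg (hz x)]
  intro z hz_mem
  have hmax := DiffContOnCl.norm_add_le_norm_of_forall_mem_frontier isBounded_ball
    (hg.diffContOnCl_of_eqOn_deriv isOpen_ball (hclosure ▸ hgzc) hgz)
    (hh.diffContOnCl_of_eqOn_deriv isOpen_ball (hclosure ▸ hhzc) hhz)
    hgz₀ hc.le hsphere (subset_closure hz_mem)
  exact (by linarith : c ≤ ‖gz z‖ - ‖hz z‖).trans (le_abs_self _)

/-- Let `w = g + h̄` be a sense-preserving harmonic diffeomorphism of the unit disk, `C¹` up to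
the closed disk (so `w_z = g'` and `w_z̄ = h̄'` extend continuously, as `gz`, `hz`), with
`||w_z(t)| - |w_z̄(t)|| ≥ c > 0` on the unit circle. Then `||w_z| - |w_z̄|| ≥ c` on the disk. -/
theorem stmt11 (g h gz hz w : ℂ → ℂ) (c : ℝ) (hc : 0 < c)
    (hg : DifferentiableOn ℂ g (ball (0 : ℂ) 1)) (hh : DifferentiableOn ℂ h (ball (0 : ℂ) 1))
    (hw : ∀ z ∈ ball (0 : ℂ) 1, w z = g z + (starRingEnd ℂ) (h z))
    (hwC1 : ContDiffOn ℝ 1 w (closedBall (0 : ℂ) 1))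
    (hgzc : ContinuousOn gz (closedBall (0 : ℂ) 1))
    (hhzc : ContinuousOn hz (closedBall (0 : ℂ) 1))
    (hgz : ∀ z ∈ ball (0 : ℂ) 1, gz z = deriv g z)
    (hhz : ∀ z ∈ ball (0 : ℂ) 1, hz z = deriv h z)
    (hsense : ∀ z ∈ ball (0 : ℂ) 1, ‖hz z‖ < ‖gz z‖)
    (hinj : Set.InjOn w (ball (0 : ℂ) 1))
    (hbd : ∀ t : ℂ, ‖t‖ = 1 → c ≤ |‖gz t‖ - ‖hz t‖|) :
    ∀ z ∈ ball (0 : ℂ) 1, c ≤ |‖gz z‖ - ‖hz z‖| :=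
  stmt11_general g h gz hz c hc hg hh hgzc hhzc hgz hhz hsense hbd
end

section
/- Let φ be continuous on the closed annulus {z : ρ ≤ |z| ≤ 1} (0 < ρ < 1), subharmonic in the open annulus, φ < 0 in the open annulus, and φ(t) = 0 for |t| = 1. If the radial derivative ∂φ/∂r exists at a point t with |t| = 1, then ∂φ/∂r(t) ≥ −2M(φ,ρ)/(ρ²(e^{1/ρ²−1} − 1)) > 0, where M(φ,ρ) = max_{|z|=ρ} φ(z) < 0. -/
/-!
Subtracting the harmonic function `c log ‖z‖` with `c = M / log ρ` leaves a subharmonic function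
that is `≤ 0` on both boundary circles, hence on the whole annulus by the weak maximum principle
(perturb by `ε ‖z‖²` and use the second-derivative test at an interior maximum). Both functions
vanish at `t`, so comparing difference quotients gives `∂φ/∂r(t) ≥ c`. This harmonic barrier beats
the paper's `e^{1/|z|²}` barrier: `s log s ≤ e^{s-1} - 1` at `s = 1/ρ²` shows
`c ≥ -2M/(ρ²(e^{1/ρ²-1} - 1))`.
-/

/-- The Laplacian of a real function on `ℂ ≅ ℝ²`, as the sum of the two pure second
directional derivatives in the directions `1` and `i`. -/
noncomputable def lapC (f : ℂ → ℝ) (z : ℂ) : ℝ :=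
  iteratedFDeriv ℝ 2 f z ![1, 1] + iteratedFDeriv ℝ 2 f z ![Complex.I, Complex.I]

open Real Filter Set Topology InnerProductSpace Laplacian

theorem lapC_eq_laplacian (f : ℂ → ℝ) : lapC f = Δ f := by
  rw [laplacian_eq_iteratedFDeriv_complexPlane]
  rfl

theorem IsLocalMax.deriv_deriv_nonpos {f : ℝ → ℝ} {x₀ : ℝ} (h : IsLocalMax f x₀)
    (hc : ContinuousAt f x₀) : deriv (deriv f) x₀ ≤ 0 := by
  by_contra! hpos
  have hmin := isLocalMin_of_deriv_deriv_pos hpos h.deriv_eq_zero hc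
  have hconst : f =ᶠ[𝓝 x₀] fun _ => f x₀ :=
    (h.and hmin).mono fun x hx => le_antisymm hx.1 hx.2
  have hderiv : deriv f =ᶠ[𝓝 x₀] fun _ => 0 :=
    hconst.eventuallyEq_nhds.mono fun x hx => by rw [hx.deriv_eq, deriv_const]
  simp [hderiv.deriv_eq] at hpos

section Line

variable {E : Type*} [NormedAddCommGroup E] [NormedSpace ℝ E]

theorem hasDerivAt_add_smul (x v : E) (s : ℝ) : HasDerivAt (fun s : ℝ => x + s • v) v s := by
  simpa using ((hasDerivAt_id s).smul_const v).const_add x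

theorem deriv_deriv_comp_add_smul {u : E → ℝ} {x : E} (hu : ContDiffAt ℝ 2 u x) (v : E) :
    deriv (deriv fun s : ℝ => u (x + s • v)) 0 = fderiv ℝ (fderiv ℝ u) x v v := by
  have hline : Tendsto (fun s : ℝ => x + s • v) (𝓝 0) (𝓝 x) := by
    simpa using ((hasDerivAt_add_smul x v 0).continuousAt).tendsto
  have hderiv : (deriv fun s : ℝ => u (x + s • v)) =ᶠ[𝓝 0]
      fun s => fderiv ℝ u (x + s • v) v := by
    filter_upwards [hline.eventually (hu.eventually (by simp))] with s hs
    exact ((hs.differentiableAt two_ne_zero).hasFDerivAt.comp_hasDerivAt s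
      (hasDerivAt_add_smul x v s)).deriv
  have hDu : HasFDerivAt (fderiv ℝ u) (fderiv ℝ (fderiv ℝ u) x) (x + (0 : ℝ) • v) := by
    simpa using ((hu.fderiv_right (m := 1) le_rfl).differentiableAt one_ne_zero).hasFDerivAt
  rw [hderiv.deriv_eq]
  exact ((ContinuousLinearMap.apply ℝ ℝ v).hasFDerivAt.comp_hasDerivAt 0
    (hDu.comp_hasDerivAt 0 (hasDerivAt_add_smul x v 0))).deriv

theorem IsLocalMax.fderiv_fderiv_apply_self_nonpos {u : E → ℝ} {x : E} (h : IsLocalMax u x)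
    (hu : ContDiffAt ℝ 2 u x) (v : E) : fderiv ℝ (fderiv ℝ u) x v v ≤ 0 := by
  rw [← deriv_deriv_comp_add_smul hu v]
  have hline := (hasDerivAt_add_smul x v 0).continuousAt
  refine IsLocalMax.deriv_deriv_nonpos ?_ (hu.continuousAt.comp_of_eq hline (by simp))
  exact IsLocalMax.comp_continuous (g := fun s : ℝ => x + s • v) (by simpa using h) hline

end Line

section Laplacian

variable {E : Type*} [NormedAddCommGroup E] [InnerProductSpace ℝ E] [FiniteDimensional ℝ E]

theorem laplacian_eq_sum_fderiv_fderiv (u : E → ℝ) (x : E) :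
    Δ u x = ∑ i, fderiv ℝ (fderiv ℝ u) x (stdOrthonormalBasis ℝ E i)
      (stdOrthonormalBasis ℝ E i) := by
  simp [laplacian_eq_iteratedFDeriv_stdOrthonormalBasis, iteratedFDeriv_two_apply]

theorem IsLocalMax.laplacian_nonpos {u : E → ℝ} {x : E} (h : IsLocalMax u x)
    (hu : ContDiffAt ℝ 2 u x) : Δ u x ≤ 0 := by
  rw [laplacian_eq_sum_fderiv_fderiv]
  exact Finset.sum_nonpos fun i _ => h.fderiv_fderiv_apply_self_nonpos hu _

theorem laplacian_norm_sq (x : E) :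
    Δ (fun y : E => ‖y‖ ^ 2) x = 2 * Module.finrank ℝ E := by
  have h : fderiv ℝ (fderiv ℝ fun y : E => ‖y‖ ^ 2) x = (2 : ℕ) • innerSL ℝ := by
    rw [fderiv_norm_sq]
    exact ((innerSL ℝ).hasFDerivAt.const_smul (2 : ℕ)).fderiv
  rw [laplacian_eq_sum_fderiv_fderiv, h]
  have hb (i) : innerSL ℝ (stdOrthonormalBasis ℝ E i) (stdOrthonormalBasis ℝ E i) = 1 := by
    rw [innerSL_apply_apply, real_inner_self_eq_norm_sq, (stdOrthonormalBasis ℝ E).orthonormal.1 i,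
      one_pow]
  simp [hb, mul_comm]

theorem IsCompact.le_of_laplacian_pos {K U : Set E} {u : E → ℝ} {m : ℝ} (hK : IsCompact K)
    (hU : IsOpen U) (hUK : U ⊆ K) (hcont : ContinuousOn u K) (hC2 : ContDiffOn ℝ 2 u U)
    (hpos : ∀ x ∈ U, 0 < Δ u x) (hbd : ∀ x ∈ K \ U, u x ≤ m) {x : E} (hx : x ∈ K) :
    u x ≤ m := by
  obtain ⟨z, hzK, hmax⟩ := hK.exists_isMaxOn ⟨x, hx⟩ hcont
  by_cases hzU : z ∈ U
  · have hloc : IsLocalMax u z := hmax.isLocalMax (mem_of_superset (hU.mem_nhds hzU) hUK)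
    exact absurd (hloc.laplacian_nonpos (hC2.contDiffAt (hU.mem_nhds hzU)))
      (not_le.2 (hpos z hzU))
  · exact (hmax hx).trans (hbd z ⟨hzK, hzU⟩)

theorem IsCompact.le_of_laplacian_nonneg [Nontrivial E] {K U : Set E} {u : E → ℝ} {m : ℝ}
    (hK : IsCompact K) (hU : IsOpen U) (hUK : U ⊆ K) (hcont : ContinuousOn u K)
    (hC2 : ContDiffOn ℝ 2 u U) (hsub : ∀ x ∈ U, 0 ≤ Δ u x) (hbd : ∀ x ∈ K \ U, u x ≤ m)
    {x : E} (hx : x ∈ K) : u x ≤ m := by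
  obtain ⟨R, hR⟩ := hK.isBounded.exists_norm_le
  have hsq : ∀ y ∈ K, ‖y‖ ^ 2 ≤ R ^ 2 := fun y hy => pow_le_pow_left₀ (norm_nonneg y) (hR y hy) 2
  refine le_of_forall_pos_le_add fun ε hε => ?_
  set δ := ε / (R ^ 2 + 1)
  have hδ : 0 < δ := by positivity
  have hδR : δ * R ^ 2 ≤ ε := by
    rw [div_mul_eq_mul_div, div_le_iff₀ (by positivity)]
    nlinarith
  have hnorm : ContDiff ℝ 2 (δ • fun y : E => ‖y‖ ^ 2) := (contDiff_norm_sq ℝ).const_smul δ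
  have hv := hK.le_of_laplacian_pos (m := m + δ * R ^ 2) hU hUK
    (hcont.add hnorm.continuous.continuousOn) (hC2.add hnorm.contDiffOn) (fun y hy => ?_)
    (fun y hy => ?_) hx
  · have := hsq x hx
    simp only [Pi.add_apply, Pi.smul_apply, smul_eq_mul] at hv
    nlinarith
  · rw [(hC2.contDiffAt (hU.mem_nhds hy)).laplacian_add hnorm.contDiffAt,
      laplacian_smul _ (contDiff_norm_sq ℝ).contDiffAt, laplacian_norm_sq]
    have : (0 : ℝ) < Module.finrank ℝ E := by exact_mod_cast Module.finrank_pos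
    simp only [smul_eq_mul]
    exact add_pos_of_nonneg_of_pos (hsub y hy) (by positivity)
  · have := hsq y hy.1
    simp only [Pi.add_apply, Pi.smul_apply, smul_eq_mul]
    nlinarith [hbd y hy]

end Laplacian

theorem le_mul_log_norm_of_laplacian_nonneg {r R c : ℝ} (hr : 0 < r) {φ : ℂ → ℝ}
    (hcont : ContinuousOn φ {z : ℂ | r ≤ ‖z‖ ∧ ‖z‖ ≤ R})
    (hC2 : ContDiffOn ℝ 2 φ {z : ℂ | r < ‖z‖ ∧ ‖z‖ < R})
    (hsub : ∀ z : ℂ, r < ‖z‖ → ‖z‖ < R → 0 ≤ Δ φ z)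
    (hin : ∀ z : ℂ, ‖z‖ = r → φ z ≤ c * log r) (hout : ∀ z : ℂ, ‖z‖ = R → φ z ≤ c * log R)
    {z : ℂ} (hz₁ : r ≤ ‖z‖) (hz₂ : ‖z‖ ≤ R) : φ z ≤ c * log ‖z‖ := by
  set K := {z : ℂ | r ≤ ‖z‖ ∧ ‖z‖ ≤ R}
  set U := {z : ℂ | r < ‖z‖ ∧ ‖z‖ < R}
  have hK : IsCompact K := (isCompact_closedBall (0 : ℂ) R).of_isClosed_subset
    (isClosed_Icc.preimage continuous_norm) fun w hw => by simpa using hw.2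
  have hU : IsOpen U := isOpen_Ioo.preimage continuous_norm
  have hne : ∀ w ∈ K, w ≠ 0 := fun w hw => norm_pos_iff.1 (hr.trans_le hw.1)
  set h : ℂ → ℝ := c • fun w => log ‖w‖
  have hh : ∀ w ∈ K, HarmonicAt h w := fun w hw =>
    (analyticAt_id.harmonicAt_log_norm (hne w hw)).const_smul
  suffices (φ - h) z ≤ 0 by simpa [h, sub_nonpos] using this
  refine hK.le_of_laplacian_nonneg hU (fun w hw => ⟨hw.1.le, hw.2.le⟩)
    (hcont.sub fun w hw => (hh w hw).1.continuousAt.continuousWithinAt)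
    (hC2.sub fun w hw => (hh w ⟨hw.1.le, hw.2.le⟩).1.contDiffWithinAt) (fun w hw => ?_)
    (fun w hw => ?_) ⟨hz₁, hz₂⟩
  · have hwK : w ∈ K := ⟨hw.1.le, hw.2.le⟩
    rw [(hC2.contDiffAt (hU.mem_nhds hw)).laplacian_sub (hh w hwK).1,
      (hh w hwK).2.eq_of_nhds, Pi.zero_apply, sub_zero]
    exact hsub w hw.1 hw.2
  · obtain ⟨⟨hw₁, hw₂⟩, hwU⟩ := hw
    simp only [Pi.sub_apply, Pi.smul_apply, smul_eq_mul, sub_nonpos, h]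
    rcases hw₁.eq_or_lt with hw₁ | hw₁
    · rw [← hw₁]
      exact hin w hw₁.symm
    · have hwR : ‖w‖ = R := hw₂.eq_of_not_lt fun h => hwU ⟨hw₁, h⟩
      rw [hwR]
      exact hout w hwR

theorem HasDerivWithinAt.le_of_eventually_le_Iio {f g : ℝ → ℝ} {f' g' b : ℝ}
    (hf : HasDerivWithinAt f f' (Iio b) b) (hg : HasDerivWithinAt g g' (Iio b) b)
    (hle : ∀ᶠ x in 𝓝[<] b, f x ≤ g x) (heq : f b = g b) : g' ≤ f' := by
  rw [hasDerivWithinAt_iff_tendsto_slope' self_notMem_Iio] at hf hg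
  refine le_of_tendsto_of_tendsto hg hf ?_
  filter_upwards [hle, self_mem_nhdsWithin] with x hx hxb
  rw [slope_def_field, slope_def_field, heq]
  exact div_le_div_of_nonpos_of_le (sub_nonpos.2 (le_of_lt hxb)) (by linarith)

theorem Real.mul_log_le_exp_sub_one_sub_one {s : ℝ} (hs : 1 ≤ s) :
    s * log s ≤ exp (s - 1) - 1 := by
  have hderiv (x : ℝ) (hx : 0 < x) : HasDerivAt (fun x => exp (x - 1) - 1 - x * log x)
      (exp (x - 1) - (log x + 1)) x := by
    refine ((((hasDerivAt_id' x).sub_const 1).exp.sub_const 1).fun_sub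
      ((hasDerivAt_id' x).fun_mul (hasDerivAt_log hx.ne'))).congr_deriv ?_
    rw [mul_one, one_mul, mul_inv_cancel₀ hx.ne']
  have hmono : MonotoneOn (fun x => exp (x - 1) - 1 - x * log x) (Ici 1) := by
    refine monotoneOn_of_hasDerivWithinAt_nonneg (convex_Ici 1)
      (fun x hx => (hderiv x (zero_lt_one.trans_le hx)).continuousAt.continuousWithinAt)
      (fun x hx => (hderiv x ?_).hasDerivWithinAt) fun x hx => ?_
    · rw [interior_Ici] at hx; exact zero_lt_one.trans hx
    · rw [interior_Ici] at hx
      have := add_one_le_exp (x - 1)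
      have := log_le_sub_one_of_pos (zero_lt_one.trans hx)
      linarith
  simpa using hmono self_mem_Ici hs hs

theorem sq_mul_exp_sub_one_pos {ρ : ℝ} (hρ0 : 0 < ρ) (hρ1 : ρ < 1) :
    0 < ρ ^ 2 * (exp (1 / ρ ^ 2 - 1) - 1) := by
  have : 1 < 1 / ρ ^ 2 := one_lt_one_div (by positivity) (pow_lt_one₀ hρ0.le hρ1 two_ne_zero)
  have : 1 < exp (1 / ρ ^ 2 - 1) := one_lt_exp_iff.2 (by linarith)
  have : 0 < exp (1 / ρ ^ 2 - 1) - 1 := by linarith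
  positivity

theorem neg_two_mul_div_le_div_log {ρ M : ℝ} (hρ0 : 0 < ρ) (hρ1 : ρ < 1) (hM : M ≤ 0) :
    -2 * M / (ρ ^ 2 * (exp (1 / ρ ^ 2 - 1) - 1)) ≤ M / log ρ := by
  have hρ2 : 0 < ρ ^ 2 := by positivity
  have hs : 1 ≤ 1 / ρ ^ 2 := one_le_one_div hρ2 (pow_le_one₀ hρ0.le hρ1.le)
  have hlog : log (1 / ρ ^ 2) = -(2 * log ρ) := by
    rw [one_div, log_inv, log_pow, Nat.cast_ofNat]
  have hkey : -(2 * log ρ) ≤ ρ ^ 2 * (exp (1 / ρ ^ 2 - 1) - 1) :=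
    calc -(2 * log ρ) = ρ ^ 2 * (1 / ρ ^ 2 * log (1 / ρ ^ 2)) := by
          rw [hlog, ← mul_assoc, mul_one_div_cancel hρ2.ne', one_mul]
      _ ≤ ρ ^ 2 * (exp (1 / ρ ^ 2 - 1) - 1) :=
          mul_le_mul_of_nonneg_left (mul_log_le_exp_sub_one_sub_one hs) hρ2.le
  rw [← neg_div_neg_eq M, div_le_div_iff₀ (sq_mul_exp_sub_one_pos hρ0 hρ1)
    (neg_pos.2 (log_neg hρ0 hρ1))]
  nlinarith

/-- Quantitative Hopf-type lemma: `φ` continuous on the closed annulus `{ρ ≤ |z| ≤ 1}`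
(`0 < ρ < 1`), subharmonic in the open annulus, `φ < 0` in `{ρ ≤ |z| < 1}`, `φ = 0` on the
unit circle. If the radial derivative `∂φ/∂r` exists at `t` with `|t| = 1`, then
`∂φ/∂r(t) ≥ -2M/(ρ²(e^{1/ρ² - 1} - 1)) > 0`, where `M = max_{|z|=ρ} φ < 0`. -/
theorem stmt13 (ρ : ℝ) (hρ0 : 0 < ρ) (hρ1 : ρ < 1) (φ : ℂ → ℝ)
    (hcont : ContinuousOn φ {z : ℂ | ρ ≤ ‖z‖ ∧ ‖z‖ ≤ 1})
    (hC2 : ContDiffOn ℝ 2 φ {z : ℂ | ρ < ‖z‖ ∧ ‖z‖ < 1})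
    (hsub : ∀ z : ℂ, ρ < ‖z‖ → ‖z‖ < 1 → 0 ≤ lapC φ z)
    (hneg : ∀ z : ℂ, ρ ≤ ‖z‖ → ‖z‖ < 1 → φ z < 0)
    (hzero : ∀ t : ℂ, ‖t‖ = 1 → φ t = 0)
    (t : ℂ) (ht : ‖t‖ = 1) (Dr : ℝ)
    (hDr : HasDerivWithinAt (fun r : ℝ => φ (r • t)) Dr (Set.Icc ρ 1) 1)
    (M : ℝ) (hM : IsGreatest (φ '' Metric.sphere (0 : ℂ) ρ) M) :
    -2 * M / (ρ ^ 2 * (Real.exp (1 / ρ ^ 2 - 1) - 1)) ≤ Dr ∧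
      0 < -2 * M / (ρ ^ 2 * (Real.exp (1 / ρ ^ 2 - 1) - 1)) := by
  have hMneg : M < 0 := by
    obtain ⟨z, hz, rfl⟩ := hM.1
    rw [mem_sphere_zero_iff_norm] at hz
    exact hneg z hz.ge (hz.trans_lt hρ1)
  set c := M / log ρ
  have hcomp (r : ℝ) (hr : r ∈ Icc ρ 1) : φ (r • t) ≤ c * log r := by
    have hnorm : ‖r • t‖ = r := by
      rw [norm_smul, ht, mul_one, Real.norm_of_nonneg (hρ0.le.trans hr.1)]
    have := le_mul_log_norm_of_laplacian_nonneg hρ0 hcont hC2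
      (fun z hz₁ hz₂ => lapC_eq_laplacian φ ▸ hsub z hz₁ hz₂)
      (fun z hz => by
        rw [div_mul_cancel₀ _ (log_neg hρ0 hρ1).ne]
        exact hM.2 ⟨z, by simpa using hz, rfl⟩)
      (fun z hz => by simp [hzero z hz]) (hnorm.ge.trans' hr.1) (hnorm.le.trans hr.2)
    rwa [hnorm] at this
  have hc : c ≤ Dr := by
    have hlog : HasDerivWithinAt (fun r => c * log r) c (Iio 1) 1 := by
      simpa using ((hasDerivAt_log one_ne_zero).const_mul c).hasDerivWithinAt
    refine (hDr.mono_of_mem_nhdsWithin (Icc_mem_nhdsLT hρ1)).le_of_eventually_le_Iio hlog ?_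
      (by simp [hzero t ht])
    filter_upwards [Ioo_mem_nhdsLT hρ1] with r hr using hcomp r (Ioo_subset_Icc_self hr)
  exact ⟨(neg_two_mul_div_le_div_log hρ0 hρ1 hMneg.le).trans hc,
    div_pos (by linarith) (sq_mul_exp_sub_one_pos hρ0 hρ1)⟩
end
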